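/- Let p be a prime, θ, q ∈ ℚ_p with 0 < |θ−1|_p < |q|_p < 1, and f(x) = ((θx+q−1)/(x+θ+q−2))³. Suppose x1 is a fixed point of f of the form x1 = x∞ + (θ−1)y1 with |y1|_p = 1, where x∞ = 2−θ−q. Then |f'(x1)|_p = |3|_p·|q|_p/|θ−1|_p; in particular, for p ∉ {3}, |f'(x1)|_p = |q|_p/|θ−1|_p > 1, so x1 is a repelling fixed point. -/

import Mathlib

/-!
Writing `x = x∞ + (θ - 1) y`, the denominator of `f` becomes `(θ - 1) y` and the numerator
`(θ - 1)(θy + 1 - θ - q)`, so `f'(x) = 3 (θ - 1 + q)(θy + 1 - θ - q)² / ((θ - 1) y⁴)`.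
Since `|θ - 1| < |q| < 1` and `|y| = 1`, the ultrametric inequality gives `|θ - 1 + q| = |q|`,
`|θ| = 1` and `|θy + 1 - θ - q| = 1`, whence `|f'(x)| = |3| |q| / |θ - 1|`.
-/

open IsUltrametricDist

section Ultrametric

variable {S : Type*} [SeminormedAddGroup S] [IsUltrametricDist S]

lemma norm_add_eq_left_of_norm_lt {x y : S} (h : ‖y‖ < ‖x‖) : ‖x + y‖ = ‖x‖ := by
  rw [norm_add_eq_max_of_norm_ne_norm h.ne', max_eq_left h.le]

lemma norm_add_eq_right_of_norm_lt {x y : S} (h : ‖x‖ < ‖y‖) : ‖x + y‖ = ‖y‖ := by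
  rw [norm_add_eq_max_of_norm_ne_norm h.ne, max_eq_right h.le]

end Ultrametric

lemma Padic.norm_natCast_eq_one_of_prime {p ℓ : ℕ} [Fact p.Prime] (hℓ : ℓ.Prime) (hne : p ≠ ℓ) :
    ‖(ℓ : ℚ_[p])‖ = 1 :=
  Padic.norm_natCast_eq_one_iff.mpr ((Nat.coprime_primes Fact.out hℓ).mpr hne)

def pottsBethe {𝕜 : Type*} [Field 𝕜] (θ q x : 𝕜) : 𝕜 :=
  ((θ * x + q - 1) / (x + θ + q - 2)) ^ 3

section Derivative

variable {𝕜 : Type*} [NontriviallyNormedField 𝕜] {θ q x : 𝕜}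

lemma hasDerivAt_pottsBethe (hx : x + θ + q - 2 ≠ 0) :
    HasDerivAt (pottsBethe θ q)
      (3 * (θ - 1) * (θ - 1 + q) * (θ * x + q - 1) ^ 2 / (x + θ + q - 2) ^ 4) x := by
  have hnum : HasDerivAt (fun x => θ * x + q - 1) θ x := by
    simpa using (((hasDerivAt_id x).const_mul θ).add_const q).sub_const 1
  have hden : HasDerivAt (fun x => x + θ + q - 2) 1 x := by
    simpa using (((hasDerivAt_id x).add_const θ).add_const q).sub_const 2
  refine HasDerivAt.congr_deriv (f := pottsBethe θ q) ((hnum.div hden hx).pow 3) ?_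
  simp only [Pi.div_apply, Nat.cast_ofNat, Nat.add_one_sub_one]
  field_simp
  ring

lemma deriv_pottsBethe_shift (hθ : θ - 1 ≠ 0) {y : 𝕜} (hy : y ≠ 0) :
    deriv (pottsBethe θ q) (2 - θ - q + (θ - 1) * y)
      = 3 * (θ - 1 + q) * (θ * y + (1 - θ - q)) ^ 2 / ((θ - 1) * y ^ 4) := by
  have hden : 2 - θ - q + (θ - 1) * y + θ + q - 2 = (θ - 1) * y := by ring
  rw [(hasDerivAt_pottsBethe (by rw [hden]; exact mul_ne_zero hθ hy)).deriv, hden]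
  field_simp
  ring

end Derivative

section UltrametricField

variable {K : Type*} [NontriviallyNormedField K] [IsUltrametricDist K] {θ q y : K}

lemma norm_eq_one_of_norm_sub_one_lt_one (h : ‖θ - 1‖ < 1) : ‖θ‖ = 1 := by
  simpa using norm_add_eq_left_of_norm_lt (x := (1 : K)) (y := θ - 1) (by simpa using h)

lemma norm_mul_add_one_sub_sub_eq_one (h₁ : ‖θ - 1‖ < ‖q‖) (h₂ : ‖q‖ < 1) (hy : ‖y‖ = 1) :
    ‖θ * y + (1 - θ - q)‖ = 1 := by
  have hθ : ‖θ * y‖ = 1 := by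
    rw [norm_mul, norm_eq_one_of_norm_sub_one_lt_one (h₁.trans h₂), hy, one_mul]
  have hc : ‖1 - θ - q‖ = ‖q‖ := by
    rw [show 1 - θ - q = -(θ - 1 + q) by ring, norm_neg, norm_add_eq_right_of_norm_lt h₁]
  rw [norm_add_eq_left_of_norm_lt (by rwa [hθ, hc]), hθ]

lemma norm_deriv_pottsBethe_shift (h₀ : 0 < ‖θ - 1‖) (h₁ : ‖θ - 1‖ < ‖q‖) (h₂ : ‖q‖ < 1)
    (hy : ‖y‖ = 1) :
    ‖deriv (pottsBethe θ q) (2 - θ - q + (θ - 1) * y)‖ = ‖(3 : K)‖ * ‖q‖ / ‖θ - 1‖ := by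
  rw [deriv_pottsBethe_shift (norm_pos_iff.mp h₀) (norm_ne_zero_iff.mp (hy ▸ one_ne_zero)),
    norm_div, norm_mul, norm_mul, norm_mul, norm_pow, norm_pow,
    norm_add_eq_right_of_norm_lt h₁, norm_mul_add_one_sub_sub_eq_one h₁ h₂ hy, hy]
  ring

end UltrametricField

theorem pottsBethe_deriv_at_x1_general (p : ℕ) [Fact p.Prime]
    (θ q : ℚ_[p]) (h1 : 0 < ‖θ - 1‖) (h2 : ‖θ - 1‖ < ‖q‖) (h3 : ‖q‖ < 1)
    (y1 x1 : ℚ_[p]) (hy1 : ‖y1‖ = 1) (hx1 : x1 = (2 - θ - q) + (θ - 1) * y1) :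
    ‖deriv (fun x : ℚ_[p] => ((θ * x + q - 1) / (x + θ + q - 2)) ^ 3) x1‖
      = ‖(3 : ℚ_[p])‖ * ‖q‖ / ‖θ - 1‖ ∧
    (p ≠ 3 →
      ‖deriv (fun x : ℚ_[p] => ((θ * x + q - 1) / (x + θ + q - 2)) ^ 3) x1‖
        = ‖q‖ / ‖θ - 1‖ ∧
      1 < ‖deriv (fun x : ℚ_[p] => ((θ * x + q - 1) / (x + θ + q - 2)) ^ 3) x1‖) := by
  have hnorm : ‖deriv (pottsBethe θ q) x1‖ = ‖(3 : ℚ_[p])‖ * ‖q‖ / ‖θ - 1‖ :=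
    hx1 ▸ norm_deriv_pottsBethe_shift h1 h2 h3 hy1
  refine ⟨hnorm, fun hp => ?_⟩
  have hthree : ‖(3 : ℚ_[p])‖ = 1 := by
    exact_mod_cast Padic.norm_natCast_eq_one_of_prime Nat.prime_three hp
  rw [hthree, one_mul] at hnorm
  exact ⟨hnorm, hnorm ▸ (one_lt_div h1).mpr h2⟩

/-- At a fixed point `x₁ = x∞ + (θ-1)y₁` with `‖y₁‖ = 1`, the derivative of the
Potts–Bethe mapping satisfies `‖f'(x₁)‖ = ‖3‖·‖q‖/‖θ-1‖`; for `p ≠ 3` this is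
`‖q‖/‖θ-1‖ > 1`, so `x₁` is repelling. -/
theorem pottsBethe_deriv_at_x1 (p : ℕ) [Fact p.Prime]
    (θ q : ℚ_[p]) (h1 : 0 < ‖θ - 1‖) (h2 : ‖θ - 1‖ < ‖q‖) (h3 : ‖q‖ < 1)
    (y1 x1 : ℚ_[p]) (hy1 : ‖y1‖ = 1) (hx1 : x1 = (2 - θ - q) + (θ - 1) * y1)
    (hfix : ((θ * x1 + q - 1) / (x1 + θ + q - 2)) ^ 3 = x1) :
    ‖deriv (fun x : ℚ_[p] => ((θ * x + q - 1) / (x + θ + q - 2)) ^ 3) x1‖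
      = ‖(3 : ℚ_[p])‖ * ‖q‖ / ‖θ - 1‖ ∧
    (p ≠ 3 →
      ‖deriv (fun x : ℚ_[p] => ((θ * x + q - 1) / (x + θ + q - 2)) ^ 3) x1‖
        = ‖q‖ / ‖θ - 1‖ ∧
      1 < ‖deriv (fun x : ℚ_[p] => ((θ * x + q - 1) / (x + θ + q - 2)) ^ 3) x1‖) :=
  pottsBethe_deriv_at_x1_general p θ q h1 h2 h3 y1 x1 hy1 hx1
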